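/- arXiv:1510.00536 — 2 statements merged into one kernel-verified Lean document; each statement's English description precedes it below -/
import Mathlib

section
/- For all x ∈ ℝ^k with all coordinates nonzero, ρ_k(x_1^{-1},...,x_k^{-1}) = ρ_k(x_1,...,x_k) · ∏_{i=1}^k x_i^2, where ρ_k(x) = 2^{-(n+1)} ∏_{1≤i<j≤k} |x_i - x_j| · ∫_{D_x} ∏_{i=1}^k |∑_{j=0}^{n-k} t_j x_i^j| dt_0⋯dt_{n-k}, with D_x = {(t_0,...,t_{n-k}) : max_{0≤i≤n} |∑_{j=0}^{n-k} (-1)^j σ_{k-i+j}(x) t_j| ≤ 1}. -/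
open MeasureTheory Finset

/-- The `m`-th elementary symmetric polynomial of `x_1, …, x_k`. -/
noncomputable def esym (k : ℕ) (x : Fin k → ℝ) (m : ℕ) : ℝ :=
  ∑ s ∈ (Finset.univ : Finset (Fin k)).powersetCard m, ∏ i ∈ s, x i

/-- Elementary symmetric polynomials extended to integer indices (zero outside `[0,k]`). -/
noncomputable def esymZ (k : ℕ) (x : Fin k → ℝ) (m : ℤ) : ℝ :=
  if 0 ≤ m then esym k x m.toNat else 0

/-- The domain of integration `D_x`. -/
def Dset (n k : ℕ) (x : Fin k → ℝ) : Set (Fin (n - k + 1) → ℝ) :=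
  {t | ∀ i : Fin (n + 1),
    |∑ j : Fin (n - k + 1), (-1) ^ (j : ℕ) * esymZ k x ((k : ℤ) - (i : ℤ) + (j : ℤ)) * t j| ≤ 1}

/-- The `k`-point correlation function `ρ_k`. -/
noncomputable def rho (n k : ℕ) (x : Fin k → ℝ) : ℝ :=
  (2 : ℝ) ^ (-(n : ℤ) - 1) *
    (∏ p ∈ Finset.univ.filter (fun p : Fin k × Fin k => p.1 < p.2), |x p.1 - x p.2|) *
    ∫ t in Dset n k x, ∏ i : Fin k, |∑ j : Fin (n - k + 1), t j * x i ^ (j : ℕ)|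

/-! Substitute `t = e⁻¹ • (u ∘ Fin.rev)` with `e = x₁ ⋯ xₖ`. Since `σₘ(1/x) = σ_{k-m}(x) / e`,
reversing the coefficients exchanges the rows `i` and `n - i` of the system defining `D_x` up to a
global sign, so the substitution maps `D_{1/x}` onto `D_x`. Each factor of the integrand satisfies
`p_u(1/y) = e y^{-(n-k)} p_t(y)`, contributing `|e|^k / |e|^{n-k}`; the Jacobian is `|e|^{n-k+1}`;
and `|1/xᵢ - 1/xⱼ| = |xᵢ - xⱼ| / |xᵢ xⱼ|` makes the Vandermonde factor lose `∏ |xᵢ|^{k-1}`.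
Altogether `ρ` gains `|e|^{k+1} / |e|^{k-1} = e²`. -/
theorem esym_eq_zero_of_lt {k m : ℕ} (x : Fin k → ℝ) (h : k < m) : esym k x m = 0 := by
  rw [esym, powersetCard_eq_empty.2 (by simpa using h), sum_empty]

theorem esym_inv_mul_prod {k m : ℕ} (x : Fin k → ℝ) (hx : ∀ i, x i ≠ 0) (hm : m ≤ k) :
    esym k (fun i => (x i)⁻¹) m * ∏ i, x i = esym k x (k - m) := by
  rw [esym, esym, sum_mul]
  refine sum_nbij' compl compl ?_ ?_ (fun s _ => compl_compl s) (fun s _ => compl_compl s) ?_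
  · intro s hs
    simp only [mem_powersetCard_univ, card_compl, Fintype.card_fin] at hs ⊢
    omega
  · intro s hs
    simp only [mem_powersetCard_univ, card_compl, Fintype.card_fin] at hs ⊢
    omega
  · intro s _
    rw [← prod_mul_prod_compl s x, prod_inv_distrib, inv_mul_cancel_left₀]
    exact prod_ne_zero_iff.2 fun i _ => hx i

theorem esymZ_inv {k : ℕ} (x : Fin k → ℝ) (hx : ∀ i, x i ≠ 0) (m : ℤ) :
    esymZ k (fun i => (x i)⁻¹) m = esymZ k x (k - m) / ∏ i, x i := by
  have hprod : ∏ i, x i ≠ 0 := prod_ne_zero_iff.2 fun i _ => hx i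
  unfold esymZ
  by_cases hm : 0 ≤ m
  · by_cases hmk : m ≤ k
    · rw [if_pos hm, if_pos (by omega), eq_div_iff hprod, esym_inv_mul_prod x hx (by omega)]
      congr 1
      omega
    · rw [if_pos hm, if_neg (by omega), esym_eq_zero_of_lt _ (by omega), zero_div]
  · rw [if_neg hm, if_pos (by omega), esym_eq_zero_of_lt _ (by omega), zero_div]

theorem neg_one_pow_sub {R : Type*} [Monoid R] [HasDistribNeg R] {a b : ℕ} (h : b ≤ a) :
    (-1 : R) ^ (a - b) = (-1) ^ a * (-1) ^ b := by
  conv_rhs => rw [← Nat.sub_add_cancel h, pow_add, mul_assoc, ← pow_add, ← two_mul, pow_mul]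
  simp

theorem sum_smul_comp_rev_mul_pow {m : ℕ} (c : ℝ) {y : ℝ} (hy : y ≠ 0) (u : Fin (m + 1) → ℝ) :
    ∑ j : Fin (m + 1), (c • (u ∘ Fin.rev)) j * y ^ (j : ℕ)
      = c * y ^ m * ∑ j : Fin (m + 1), u j * y⁻¹ ^ (j : ℕ) := by
  rw [← Equiv.sum_comp Fin.revPerm, mul_sum]
  refine sum_congr rfl fun j _ => ?_
  have hj : (j : ℕ) ≤ m := Nat.lt_succ_iff.1 j.isLt
  simp only [Fin.revPerm_apply, Pi.smul_apply, Function.comp_apply, Fin.rev_rev, smul_eq_mul,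
    Fin.val_rev, Nat.add_sub_add_right, pow_sub₀ y hy hj, inv_pow]
  ring

theorem Dset_row_inv {n k : ℕ} (hkn : k ≤ n) (x : Fin k → ℝ) (hx : ∀ i, x i ≠ 0)
    (u : Fin (n - k + 1) → ℝ) (i : Fin (n + 1)) :
    ∑ j : Fin (n - k + 1), (-1) ^ (j : ℕ) * esymZ k x (k - (i.rev : ℤ) + j)
        * ((∏ i, x i)⁻¹ • (u ∘ Fin.rev)) j
      = (-1) ^ (n - k) * ∑ j : Fin (n - k + 1),
          (-1) ^ (j : ℕ) * esymZ k (fun i => (x i)⁻¹) (k - i + j) * u j := by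
  rw [← Equiv.sum_comp Fin.revPerm, mul_sum]
  refine sum_congr rfl fun j _ => ?_
  have hj : (j : ℕ) ≤ n - k := Nat.lt_succ_iff.1 j.isLt
  have hidx : (k : ℤ) - (i.rev : ℤ) + (j.rev : ℤ) = k - (k - i + j) := by
    rw [Fin.val_rev, Fin.val_rev]; omega
  simp only [Fin.revPerm_apply, Pi.smul_apply, Function.comp_apply, Fin.rev_rev, smul_eq_mul,
    hidx, esymZ_inv x hx]
  rw [Fin.val_rev, Nat.add_sub_add_right, neg_one_pow_sub hj]
  ring

theorem Dset_inv {n k : ℕ} (hkn : k ≤ n) (x : Fin k → ℝ) (hx : ∀ i, x i ≠ 0) :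
    Dset n k (fun i => (x i)⁻¹) = (fun u => (∏ i, x i)⁻¹ • (u ∘ Fin.rev)) ⁻¹' Dset n k x := by
  ext u
  simp only [Dset, Set.mem_preimage, Set.mem_ofPred_eq]
  conv_rhs => rw [Fin.rev_surjective.forall]
  simp only [Dset_row_inv hkn x hx, abs_mul, abs_pow, abs_neg, abs_one, one_pow, one_mul]

open scoped Pointwise in
theorem setIntegral_preimage_smul_comp_rev {m : ℕ} {E : Type*} [NormedAddCommGroup E]
    [NormedSpace ℝ E] {c : ℝ} (hc : c ≠ 0) (S : Set (Fin m → ℝ)) (g : (Fin m → ℝ) → E) :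
    ∫ u in (fun u => c • (u ∘ Fin.rev)) ⁻¹' S, g (c • (u ∘ Fin.rev))
      = |(c ^ m)⁻¹| • ∫ v in S, g v := by
  set rev : (Fin m → ℝ) ≃ᵐ (Fin m → ℝ) :=
    MeasurableEquiv.piCongrLeft (fun _ : Fin m => ℝ) Fin.revPerm
  have hrev : ⇑rev = fun u => u ∘ Fin.rev := by
    ext u j
    simpa using MeasurableEquiv.piCongrLeft_apply_apply (β := fun _ => ℝ) Fin.revPerm u (Fin.rev j)
  have hrev_vol : MeasurePreserving rev := volume_measurePreserving_piCongrLeft _ _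
  have hsmul : c • ((fun v => c • v) ⁻¹' S) = S := by
    ext v
    simp [Set.mem_smul_set_iff_inv_smul_mem₀ hc, smul_inv_smul₀ hc]
  calc ∫ u in (fun u => c • (u ∘ Fin.rev)) ⁻¹' S, g (c • (u ∘ Fin.rev))
      = ∫ u in rev ⁻¹' ((fun v => c • v) ⁻¹' S), g (c • rev u) := by rw [hrev]; rfl
    _ = ∫ v in (fun v => c • v) ⁻¹' S, g (c • v) :=
      hrev_vol.setIntegral_preimage_emb rev.measurableEmbedding (fun v => g (c • v)) _
    _ = |(c ^ m)⁻¹| • ∫ v in S, g v := by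
      rw [Measure.setIntegral_comp_smul _ _ _ hc, hsmul, Module.finrank_fin_fun]

theorem prod_abs_sum_mul_inv_pow {k m : ℕ} (x : Fin k → ℝ) (hx : ∀ i, x i ≠ 0)
    (u : Fin (m + 1) → ℝ) :
    ∏ i, |∑ j : Fin (m + 1), u j * (x i)⁻¹ ^ (j : ℕ)|
      = |∏ i, x i| ^ k / |∏ i, x i| ^ m
        * ∏ i, |∑ j : Fin (m + 1), ((∏ i, x i)⁻¹ • (u ∘ Fin.rev)) j * x i ^ (j : ℕ)| := by
  have he : |∏ i, x i| ≠ 0 := abs_ne_zero.2 (prod_ne_zero_iff.2 fun i _ => hx i)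
  simp only [sum_smul_comp_rev_mul_pow _ (hx _), abs_mul, prod_mul_distrib, abs_inv, abs_pow,
    prod_const, card_univ, Fintype.card_fin, prod_pow, inv_pow]
  rw [← abs_prod univ x]
  field_simp

theorem integral_Dset_inv {n k : ℕ} (hkn : k ≤ n) (x : Fin k → ℝ) (hx : ∀ i, x i ≠ 0) :
    ∫ t in Dset n k (fun i => (x i)⁻¹), ∏ i, |∑ j : Fin (n - k + 1), t j * (x i)⁻¹ ^ (j : ℕ)|
      = |∏ i, x i| ^ (k + 1)
        * ∫ t in Dset n k x, ∏ i, |∑ j : Fin (n - k + 1), t j * x i ^ (j : ℕ)| := by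
  have he : ∏ i, x i ≠ 0 := prod_ne_zero_iff.2 fun i _ => hx i
  simp only [Dset_inv hkn x hx, prod_abs_sum_mul_inv_pow x hx]
  rw [integral_const_mul, setIntegral_preimage_smul_comp_rev (inv_ne_zero he) _
    (fun t => ∏ i, |∑ j : Fin (n - k + 1), t j * x i ^ (j : ℕ)|), smul_eq_mul, inv_pow, inv_inv,
    abs_pow]
  field_simp
  ring

theorem prod_filter_lt_mul {M : Type*} [CommMonoid M] {k : ℕ} (f : Fin k → M) :
    ∏ p ∈ univ.filter (fun p : Fin k × Fin k => p.1 < p.2), f p.1 * f p.2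
      = ∏ i, f i ^ (k - 1) := by
  have hfst : ∏ p ∈ univ.filter (fun p : Fin k × Fin k => p.1 < p.2), f p.1
      = ∏ i, f i ^ (k - 1 - i) := by
    rw [prod_filter, Fintype.prod_prod_type]
    refine prod_congr rfl fun i _ => ?_
    rw [← prod_filter]
    dsimp only
    rw [prod_const, filter_lt_eq_Ioi, Fin.card_Ioi]
  have hsnd : ∏ p ∈ univ.filter (fun p : Fin k × Fin k => p.1 < p.2), f p.2
      = ∏ i, f i ^ (i : ℕ) := by
    rw [prod_filter, Fintype.prod_prod_type, prod_comm]
    refine prod_congr rfl fun j _ => ?_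
    rw [← prod_filter]
    dsimp only
    rw [prod_const, filter_gt_eq_Iio, Fin.card_Iio]
  rw [prod_mul_distrib, hfst, hsnd, ← prod_mul_distrib]
  refine prod_congr rfl fun i _ => ?_
  rw [← pow_add]
  congr 1
  omega

theorem prod_filter_lt_abs_inv_sub_inv {k : ℕ} (x : Fin k → ℝ) (hx : ∀ i, x i ≠ 0) :
    (∏ p ∈ univ.filter (fun p : Fin k × Fin k => p.1 < p.2), |(x p.1)⁻¹ - (x p.2)⁻¹|)
        * ∏ i, |x i| ^ (k - 1)
      = ∏ p ∈ univ.filter (fun p : Fin k × Fin k => p.1 < p.2), |x p.1 - x p.2| := by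
  rw [← prod_filter_lt_mul, ← prod_mul_distrib]
  refine prod_congr rfl fun p _ => ?_
  rw [inv_sub_inv (hx p.1) (hx p.2), abs_div, abs_mul, abs_sub_comm]
  have hx₁ := hx p.1
  have hx₂ := hx p.2
  field_simp

theorem rho_inversion_general (n k : ℕ) (hkn : k ≤ n)
    (x : Fin k → ℝ) (hx : ∀ i, x i ≠ 0) :
    rho n k (fun i => (x i)⁻¹) = rho n k x * ∏ i : Fin k, (x i) ^ 2 := by
  have hpow : (∏ i, |x i| ^ (k - 1)) * ∏ i, x i ^ 2 = |∏ i, x i| ^ (k + 1) := by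
    rw [abs_prod, ← prod_pow, ← prod_mul_distrib]
    refine prod_congr rfl fun i _ => ?_
    have hk := i.pos
    rw [← sq_abs, ← pow_add]
    congr 1
    omega
  rw [rho, rho, integral_Dset_inv hkn x hx, ← prod_filter_lt_abs_inv_sub_inv x hx, ← hpow]
  ring

theorem rho_inversion (n k : ℕ) (hn : 2 ≤ n) (hk1 : 1 ≤ k) (hkn : k ≤ n)
    (x : Fin k → ℝ) (hx : ∀ i, x i ≠ 0) :
    rho n k (fun i => (x i)⁻¹) = rho n k x * ∏ i : Fin k, (x i) ^ 2 :=
  rho_inversion_general n k hkn x hx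
end

section
/- For any n ≥ 2 and x ∈ [-1 + 1/√2, 1 - 1/√2], the one-point density satisfies ρ(x) = (1/12)·(3 + ∑_{k=1}^{n-1} (k+1)^2 x^{2k}), where ρ(x) = 2^{-(n+1)} ∫_{D_x} |∑_{j=1}^n j t_j x^{j-1}| dt_1⋯dt_n and D_x = {(t_1,...,t_n) : max_{1≤j≤n} |t_j| ≤ 1, |t_n x^n + ⋯ + t_1 x| ≤ 1}. -/
/-!
For `|x| ≤ 1 - 1/√2` the constraint `|∑ t_j x^j| ≤ 1` follows from `max |t_j| ≤ 1`, so the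
integral runs over the cube `[-1, 1]^n`. Splitting off `t₁`, the integrand is `|t₁ + c(t')|` with
`c(t') = ∑_{k ≥ 1} (k + 1) x^k t_{k+1}` and `|c| ≤ ∑_{k ≥ 1} (k + 1) |x|^k ≤ 1`, so the
`t₁`-integral is `∫_{-1}^{1} |t + c| dt = 1 + c²`. Integrating `c²` over the remaining cube only
the diagonal terms survive, since distinct coordinates are independent and centred.
-/

open MeasureTheory Finset

local notation "ν" => (volume.restrict (Set.Icc (-1 : ℝ) 1) : Measure ℝ)

lemma one_sub_sq_mul_sum_range_succ_mul_pow (m : ℕ) (y : ℝ) :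
    (1 - y) ^ 2 * ∑ k ∈ range m, ((k : ℝ) + 1) * y ^ k
      = 1 - ((m : ℝ) + 1) * y ^ m + m * y ^ (m + 1) := by
  induction m with
  | zero => simp
  | succ m ih =>
    rw [sum_range_succ, mul_add, ih]
    push_cast
    ring

/-- The threshold `1 - 1/√2` is exactly where `∑_{k ≥ 1} (k + 1) y^k = (1 - y)⁻² - 1`
reaches `1`. -/
lemma sum_range_add_two_mul_pow_succ_le_one (m : ℕ) {y : ℝ} (hy₀ : 0 ≤ y)
    (hy : y ≤ 1 - 1 / √2) : ∑ k ∈ range m, ((k : ℝ) + 2) * y ^ (k + 1) ≤ 1 := by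
  have hsqrt : 1 / √2 ^ 2 = 1 / 2 := by rw [Real.sq_sqrt zero_le_two]
  have hy₁ : y ≤ 1 := hy.trans (sub_le_self _ (by positivity))
  have hsq : 1 / 2 ≤ (1 - y) ^ 2 := by
    rw [← hsqrt, ← one_div_pow]
    exact pow_le_pow_left₀ (by positivity) (by linarith) 2
  have hid := one_sub_sq_mul_sum_range_succ_mul_pow (m + 1) y
  rw [sum_range_succ'] at hid
  have hshift : ∑ k ∈ range m, (((k + 1 : ℕ) : ℝ) + 1) * y ^ (k + 1)
      = ∑ k ∈ range m, ((k : ℝ) + 2) * y ^ (k + 1) := by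
    refine sum_congr rfl fun k _ => ?_
    push_cast
    ring
  rw [hshift] at hid
  set T := ∑ k ∈ range m, ((k : ℝ) + 2) * y ^ (k + 1)
  have hT : 0 ≤ T := by positivity
  have hrem : 0 ≤ y ^ (m + 1) * (1 + ((m : ℝ) + 1) * (1 - y)) := by
    have : 0 ≤ 1 - y := by linarith
    positivity
  have hle : (1 - y) ^ 2 * (T + 1) = 1 - y ^ (m + 1) * (1 + ((m : ℝ) + 1) * (1 - y)) := by
    push_cast at hid
    linear_combination hid
  nlinarith [mul_le_mul_of_nonneg_right hsq (by linarith : (0 : ℝ) ≤ T + 1)]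

lemma abs_sum_mul_le_sum_abs_of_abs_le_one {ι : Type*} (s : Finset ι) (w y : ι → ℝ)
    (hy : ∀ i ∈ s, |y i| ≤ 1) : |∑ i ∈ s, w i * y i| ≤ ∑ i ∈ s, |w i| :=
  (abs_sum_le_sum_abs _ _).trans <| sum_le_sum fun i hi => by
    rw [abs_mul]
    exact mul_le_of_le_one_right (abs_nonneg _) (hy i hi)

lemma integral_abs_of_nonpos_of_nonneg {a b : ℝ} (ha : a ≤ 0) (hb : 0 ≤ b) :
    ∫ u in a..b, |u| = (a ^ 2 + b ^ 2) / 2 := by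
  have hint (c d : ℝ) : IntervalIntegrable (|·|) volume c d :=
    continuous_abs.intervalIntegrable c d
  rw [← intervalIntegral.integral_add_adjacent_intervals (hint a 0) (hint 0 b)]
  have hneg : ∫ u in a..0, |u| = ∫ u in a..0, -u :=
    intervalIntegral.integral_congr fun u hu => by
      rw [Set.uIcc_of_le ha] at hu
      exact abs_of_nonpos hu.2
  have hpos : ∫ u in (0 : ℝ)..b, |u| = ∫ u in (0 : ℝ)..b, u :=
    intervalIntegral.integral_congr fun u hu => by
      rw [Set.uIcc_of_le hb] at hu
      exact abs_of_nonneg hu.1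
  rw [hneg, hpos, intervalIntegral.integral_neg, integral_id, integral_id]
  ring

lemma integral_abs_add_of_abs_le_one {c : ℝ} (hc : |c| ≤ 1) :
    ∫ t in (-1 : ℝ)..1, |t + c| = 1 + c ^ 2 := by
  rw [intervalIntegral.integral_comp_add_right (|·|),
    integral_abs_of_nonpos_of_nonneg (by linarith [(abs_le.1 hc).2])
      (by linarith [(abs_le.1 hc).1])]
  ring

lemma integral_restrict_Icc_neg_one_one (f : ℝ → ℝ) :
    ∫ t, f t ∂ν = ∫ t in (-1 : ℝ)..1, f t := by
  rw [integral_Icc_eq_integral_Ioc, intervalIntegral.integral_of_le (by norm_num)]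

section Pi

variable {ι : Type*} [Fintype ι]

lemma measureReal_pi_restrict_Icc_univ :
    (Measure.pi fun _ : ι => ν).real Set.univ = 2 ^ Fintype.card ι := by
  rw [measureReal_def, Measure.pi_univ, Measure.restrict_apply_univ, Real.volume_Icc]
  norm_num

lemma ae_pi_restrict_Icc_mem [Countable ι] :
    ∀ᵐ y ∂(Measure.pi fun _ : ι => ν), ∀ i, y i ∈ Set.Icc (-1 : ℝ) 1 :=
  ae_all_iff.2 fun _ => Measure.tendsto_eval_ae_ae (ae_restrict_mem measurableSet_Icc)

lemma eval_mul_eval_eq_prod [DecidableEq ι] (y : ι → ℝ) (i j : ι) :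
    y i * y j = ∏ k, (if k = i then y k else 1) * (if k = j then y k else 1) := by
  rw [prod_mul_distrib, prod_ite_eq', prod_ite_eq']
  simp

lemma integrable_pi_eval_mul_eval (i j : ι) :
    Integrable (fun y : ι → ℝ => y i * y j) (Measure.pi fun _ : ι => ν) := by
  classical
  simp_rw [eval_mul_eval_eq_prod (ι := ι) _ i j]
  refine Integrable.fintype_prod
    (f := fun k t => (if k = i then t else 1) * (if k = j then t else 1))
    fun k => Continuous.integrableOn_Icc ?_
  split_ifs <;> fun_prop

lemma integral_pi_eval_mul_eval [DecidableEq ι] (i j : ι) :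
    ∫ y, y i * y j ∂(Measure.pi fun _ : ι => ν)
      = if i = j then 2 ^ Fintype.card ι / 3 else 0 := by
  simp_rw [eval_mul_eval_eq_prod _ i j]
  rw [integral_fintype_prod_eq_prod
    (fun k t => (if k = i then t else 1) * (if k = j then t else 1))]
  split_ifs with hij
  · subst hij
    have hfactor (k : ι) : ∫ t, (if k = i then t else 1) * (if k = i then t else 1) ∂ν
        = 2 * if k = i then 1 / 3 else 1 := by
      rw [integral_restrict_Icc_neg_one_one]
      split_ifs <;> norm_num [← sq, integral_pow]
    simp_rw [hfactor, prod_mul_distrib, prod_ite_eq', prod_const, card_univ]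
    rw [if_pos (mem_univ i), mul_one_div]
  · refine prod_eq_zero (mem_univ i) ?_
    simp only [↓reduceIte, hij, mul_one]
    rw [integral_restrict_Icc_neg_one_one, integral_id]
    norm_num

lemma sq_sum_mul_eq_sum_sum (a y : ι → ℝ) :
    (∑ i, a i * y i) ^ 2 = ∑ i, ∑ j, a i * a j * (y i * y j) := by
  rw [sq, sum_mul_sum]
  exact sum_congr rfl fun i _ => sum_congr rfl fun j _ => by ring

lemma integrable_pi_sq_sum_mul_eval (a : ι → ℝ) :
    Integrable (fun y : ι → ℝ => (∑ i, a i * y i) ^ 2) (Measure.pi fun _ : ι => ν) := by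
  simp_rw [sq_sum_mul_eq_sum_sum]
  exact integrable_finsetSum _ fun i _ => integrable_finsetSum _ fun j _ =>
    (integrable_pi_eval_mul_eval i j).const_mul _

lemma integral_pi_sq_sum_mul_eval (a : ι → ℝ) :
    ∫ y, (∑ i, a i * y i) ^ 2 ∂(Measure.pi fun _ : ι => ν)
      = 2 ^ Fintype.card ι / 3 * ∑ i, a i ^ 2 := by
  classical
  simp_rw [sq_sum_mul_eq_sum_sum]
  rw [integral_finsetSum _ fun i _ => integrable_finsetSum _ fun j _ =>
    (integrable_pi_eval_mul_eval i j).const_mul _]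
  simp_rw [integral_finsetSum _ fun j _ => (integrable_pi_eval_mul_eval _ j).const_mul _,
    integral_const_mul, integral_pi_eval_mul_eval, mul_ite, mul_zero, sum_ite_eq, mem_univ,
    if_true, mul_sum]
  exact sum_congr rfl fun i _ => by ring

end Pi

lemma integral_pi_fin_succ_eq_integral_integral_cons {E G : Type*} [MeasurableSpace E]
    [NormedAddCommGroup G] [NormedSpace ℝ G] {n : ℕ} (μ : Measure E) [SigmaFinite μ]
    {f : (Fin (n + 1) → E) → G} (hf : Integrable f (Measure.pi fun _ => μ)) :
    ∫ y, f y ∂(Measure.pi fun _ => μ)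
      = ∫ y, ∫ s, f (Fin.cons s y) ∂μ ∂(Measure.pi fun _ => μ) := by
  have e := (measurePreserving_piFinSuccAbove (fun _ : Fin (n + 1) => μ) 0).symm
  rw [← e.integrable_comp_emb (MeasurableEquiv.measurableEmbedding _)] at hf
  rw [← e.integral_comp', ← Function.comp_def, integral_prod_symm _ hf]
  simp [MeasurableEquiv.piFinSuccAbove_symm_apply, Fin.insertNthEquiv]

lemma integral_pi_abs_eval_zero_add_sum (m : ℕ) (a : Fin m → ℝ) (ha : ∑ i, |a i| ≤ 1) :
    ∫ y, |y 0 + ∑ i, a i * y i.succ| ∂(Measure.pi fun _ : Fin (m + 1) => ν)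
      = 2 ^ m * (1 + (∑ i, a i ^ 2) / 3) := by
  have hint : Integrable (fun y : Fin (m + 1) → ℝ => |y 0 + ∑ i, a i * y i.succ|)
      (Measure.pi fun _ => ν) := by
    have hid : Integrable id ν := continuous_id.integrableOn_Icc
    exact ((integrable_eval hid).add (integrable_finsetSum _ fun i _ =>
      (integrable_eval hid).const_mul _)).abs
  have hinner : (fun y : Fin m → ℝ => ∫ s, |s + ∑ i, a i * y i| ∂ν)
      =ᵐ[Measure.pi fun _ => ν] fun y => 1 + (∑ i, a i * y i) ^ 2 := by
    filter_upwards [ae_pi_restrict_Icc_mem] with y hy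
    rw [integral_restrict_Icc_neg_one_one, integral_abs_add_of_abs_le_one]
    exact (abs_sum_mul_le_sum_abs_of_abs_le_one _ _ _ fun i _ => abs_le.2 (hy i)).trans ha
  rw [integral_pi_fin_succ_eq_integral_integral_cons ν hint]
  simp only [Fin.cons_zero, Fin.cons_succ]
  rw [integral_congr_ae hinner, integral_add (integrable_const _)
    (integrable_pi_sq_sum_mul_eval a), integral_const, smul_eq_mul, mul_one,
    measureReal_pi_restrict_Icc_univ, integral_pi_sq_sum_mul_eval, Fintype.card_fin]
  ring

lemma setOf_abs_le_one_and_abs_sum_mul_le_one {ι : Type*} [Fintype ι] (w : ι → ℝ)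
    (hw : ∑ i, |w i| ≤ 1) :
    {t : ι → ℝ | (∀ i, |t i| ≤ 1) ∧ |∑ i, t i * w i| ≤ 1}
      = Set.univ.pi fun _ => Set.Icc (-1) 1 := by
  ext t
  simp only [Set.mem_ofPred_eq, Set.mem_univ_pi, Set.mem_Icc, ← abs_le, and_iff_left_iff_imp]
  intro ht
  simp_rw [mul_comm (t _)]
  exact (abs_sum_mul_le_sum_abs_of_abs_le_one _ _ _ fun i _ => ht i).trans hw

lemma sum_fin_abs_add_two_mul_pow_succ_le_one (m : ℕ) {x : ℝ} (hx : |x| ≤ 1 - 1 / √2) :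
    ∑ i : Fin m, |((i : ℕ) + 2 : ℝ) * x ^ ((i : ℕ) + 1)| ≤ 1 := by
  have habs (i : Fin m) : |((i : ℕ) + 2 : ℝ) * x ^ ((i : ℕ) + 1)|
      = ((i : ℕ) + 2 : ℝ) * |x| ^ ((i : ℕ) + 1) := by
    rw [abs_mul, abs_pow, abs_of_nonneg (by positivity)]
  simp_rw [habs]
  rw [Fin.sum_univ_eq_sum_range (fun k => ((k : ℝ) + 2) * |x| ^ (k + 1))]
  exact sum_range_add_two_mul_pow_succ_le_one m (abs_nonneg x) hx

lemma sum_fin_abs_pow_succ_le_one (m : ℕ) {x : ℝ} (hx : |x| ≤ 1 - 1 / √2) :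
    ∑ j : Fin m, |x ^ ((j : ℕ) + 1)| ≤ 1 := by
  refine (sum_le_sum fun j _ => ?_).trans (sum_fin_abs_add_two_mul_pow_succ_le_one m hx)
  rw [abs_mul]
  exact le_mul_of_one_le_left (abs_nonneg _)
    (le_abs.2 (Or.inl (by linarith [(j : ℕ).cast_nonneg (α := ℝ)])))

theorem density_formula (n : ℕ) (hn : 2 ≤ n) (x : ℝ)
    (hx : x ∈ Set.Icc (-1 + 1 / Real.sqrt 2) (1 - 1 / Real.sqrt 2)) :
    (2 : ℝ) ^ (-(n : ℤ) - 1) *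
        ∫ t in {t : Fin n → ℝ | (∀ j, |t j| ≤ 1) ∧
            |∑ j : Fin n, t j * x ^ ((j : ℕ) + 1)| ≤ 1},
          |∑ j : Fin n, ((j : ℕ) + 1 : ℝ) * t j * x ^ (j : ℕ)| =
      1 / 12 * (3 + ∑ k ∈ Finset.range (n - 1), ((k : ℝ) + 2) ^ 2 * x ^ (2 * (k + 1))) := by
  obtain ⟨m, rfl⟩ : ∃ m, n = m + 1 := ⟨n - 1, by omega⟩
  have hx' : |x| ≤ 1 - 1 / √2 := abs_le.2 ⟨by linarith [hx.1], hx.2⟩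
  set a : Fin m → ℝ := fun i => ((i : ℕ) + 2 : ℝ) * x ^ ((i : ℕ) + 1)
  have hintegrand (t : Fin (m + 1) → ℝ) :
      ∑ j : Fin (m + 1), ((j : ℕ) + 1 : ℝ) * t j * x ^ (j : ℕ) = t 0 + ∑ i, a i * t i.succ := by
    rw [Fin.sum_univ_succ]
    simp only [Fin.val_zero, Fin.val_succ, Nat.cast_zero, Nat.cast_succ, zero_add, one_mul,
      pow_zero, mul_one]
    exact congrArg _ (sum_congr rfl fun i _ => by simp only [a]; ring)
  have hscale : (2 : ℝ) ^ (-((m + 1 : ℕ) : ℤ) - 1) * 2 ^ m = 1 / 4 := by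
    rw [← zpow_natCast, ← zpow_add₀ two_ne_zero,
      show -((m + 1 : ℕ) : ℤ) - 1 + m = -2 by push_cast; ring]
    norm_num
  have hsum : ∑ i, a i ^ 2 = ∑ k ∈ range m, ((k : ℝ) + 2) ^ 2 * x ^ (2 * (k + 1)) := by
    rw [Fin.sum_univ_eq_sum_range (fun k => (((k : ℝ) + 2) * x ^ (k + 1)) ^ 2)]
    exact sum_congr rfl fun k _ => by ring
  rw [setOf_abs_le_one_and_abs_sum_mul_le_one _ (sum_fin_abs_pow_succ_le_one (m + 1) hx'),
    volume_pi, Measure.restrict_pi_pi]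
  simp_rw [hintegrand]
  rw [integral_pi_abs_eval_zero_add_sum m a (sum_fin_abs_add_two_mul_pow_succ_le_one m hx'),
    ← mul_assoc, hscale, Nat.add_sub_cancel, ← hsum]
  ring
end
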